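/- arXiv:1507.06464 — 2 statements merged into one kernel-verified Lean document; each statement's English description precedes it below -/
import Mathlib

section
/- Let x_n be defined by x_0 = u_0, x_1 = u_1 + u_0/q, and x_{n+2} = u_{n+2} + x_{n+1}/q + x_n/q^2, where (u_n) is any real sequence and q ≠ 0. Then x_n = ∑_{k=0}^n (f_k / q^k) u_{n-k}, where (f_k) is the Fibonacci sequence with f_0 = f_1 = 1. -/
open scoped BigOperators

noncomputable def fibr (k : ℕ) : ℝ := Nat.fib (k + 1)

noncomputable def phi : ℝ := (1 + Real.sqrt 5) / 2

noncomputable def S (q : ℝ) (j : ℕ) : ℝ := ∑' k : ℕ, fibr (j + k) / q ^ k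

noncomputable def Q (j : ℕ) : ℝ :=
  (fibr (j + 2) + Real.sqrt ((fibr (j + 2)) ^ 2 + 8 * (fibr j) ^ 2)) / (2 * fibr j)

/-!
The recursion is a second-order linear filter driven by `u`, so `x` is the convolution of `u`
with the filter's impulse response `c`, which solves the homogeneous recursion with `c 0 = 1`,
`c 1 = 1/q`. Since the Fibonacci numbers satisfy the same recursion without the factors `1/q`,
the impulse response is `c k = f_k / q ^ k`.
-/

open Finset

section LinearRecurrence

variable {R : Type*} [CommSemiring R] {a b : R} {c : ℕ → R}

theorem sum_range_mul_sub_add_two (hc0 : c 0 = 1) (hc1 : c 1 = a)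
    (hc : ∀ k, c (k + 2) = a * c (k + 1) + b * c k) (u : ℕ → R) (n : ℕ) :
    ∑ k ∈ range (n + 3), c k * u (n + 2 - k) =
      u (n + 2) + a * ∑ k ∈ range (n + 2), c k * u (n + 1 - k)
        + b * ∑ k ∈ range (n + 1), c k * u (n - k) := by
  rw [sum_range_succ', sum_range_succ', sum_range_succ' _ (n + 1)]
  simp only [hc, hc0, hc1, add_mul, sum_add_distrib, mul_add, mul_sum, mul_assoc,
    Nat.add_sub_add_right, Nat.sub_zero, zero_add, Nat.reduceSubDiff, one_mul]
  ring

theorem eq_sum_range_mul_sub_of_linear_recurrence (hc0 : c 0 = 1) (hc1 : c 1 = a)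
    (hc : ∀ k, c (k + 2) = a * c (k + 1) + b * c k) {u x : ℕ → R}
    (hx0 : x 0 = u 0) (hx1 : x 1 = u 1 + a * u 0)
    (hx : ∀ n, x (n + 2) = u (n + 2) + a * x (n + 1) + b * x n) (n : ℕ) :
    x n = ∑ k ∈ range (n + 1), c k * u (n - k) := by
  induction n using Nat.twoStepInduction with
  | zero => simp [hx0, hc0]
  | one => simp [sum_range_succ, hx1, hc0, hc1, add_comm]
  | more n ih0 ih1 => rw [hx, ih0, ih1, sum_range_mul_sub_add_two hc0 hc1 hc]

end LinearRecurrence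

theorem fibr_add_two (k : ℕ) : fibr (k + 2) = fibr (k + 1) + fibr k := by
  simp only [fibr, Nat.fib_add_two, Nat.cast_add]
  ring

theorem fibr_div_pow_add_two (q : ℝ) (k : ℕ) :
    fibr (k + 2) / q ^ (k + 2) =
      q⁻¹ * (fibr (k + 1) / q ^ (k + 1)) + (q ^ 2)⁻¹ * (fibr k / q ^ k) := by
  rw [fibr_add_two]
  ring

theorem closed_formula_general (q : ℝ) (u x : ℕ → ℝ)
    (h0 : x 0 = u 0) (h1 : x 1 = u 1 + u 0 / q)
    (hrec : ∀ n, x (n + 2) = u (n + 2) + x (n + 1) / q + x n / q ^ 2) :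
    ∀ n, x n = ∑ k ∈ Finset.range (n + 1), fibr k / q ^ k * u (n - k) :=
  eq_sum_range_mul_sub_of_linear_recurrence (c := fun k => fibr k / q ^ k) (b := (q ^ 2)⁻¹)
    (by simp [fibr]) (by simp [fibr]) (fibr_div_pow_add_two q)
    h0 (by rw [h1, div_eq_inv_mul]) (fun n => by rw [hrec, div_eq_inv_mul, div_eq_inv_mul])

theorem closed_formula (q : ℝ) (hq : q ≠ 0) (u x : ℕ → ℝ)
    (h0 : x 0 = u 0) (h1 : x 1 = u 1 + u 0 / q)
    (hrec : ∀ n, x (n + 2) = u (n + 2) + x (n + 1) / q + x n / q ^ 2) :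
    ∀ n, x n = ∑ k ∈ Finset.range (n + 1), fibr k / q ^ k * u (n - k) :=
  closed_formula_general q u x h0 h1 hrec
end

section
/- If φ < q ≤ Q(0) = (2 + √(4+8))/2 = 1 + √3, then the reachable set R_q := { ∑_{k=0}^∞ (f_k/q^k) u_k : u_k ∈ {0,1} } equals the interval [0, S(q,0)], namely R_q = [0, q²/(q² − q − 1)]. -/
open scoped BigOperators

lemma one_lt_phi : (1:ℝ) < phi := by
  have h5 : (1:ℝ) < Real.sqrt 5 := by
    have := Real.lt_sqrt (x := 1) (y := 5) (by norm_num)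
    rw [this]; norm_num
  unfold phi; linarith

lemma phi_sq : phi ^ 2 = phi + 1 := by
  have h : Real.sqrt 5 ^ 2 = 5 := Real.sq_sqrt (by norm_num)
  unfold phi; nlinarith [h]

lemma fib_le_phi_pow (n : ℕ) : (Nat.fib (n+1) : ℝ) ≤ phi ^ n := by
  induction n using Nat.twoStepInduction with
  | zero => simp
  | one => simp [pow_one]; linarith [one_lt_phi]
  | more n ih1 ih2 =>
    have h : Nat.fib (n+3) = Nat.fib (n+2) + Nat.fib (n+1) := by
      rw [Nat.fib_add_two]; ring_nf
    have hphi : (0:ℝ) < phi := by linarith [one_lt_phi]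
    calc (Nat.fib (n+2+1) : ℝ) = (Nat.fib (n+2) : ℝ) + Nat.fib (n+1) := by
          rw [show n+2+1 = n+3 from rfl, h]; push_cast; ring
      _ ≤ phi ^ (n+1) + phi ^ n := by linarith
      _ = phi ^ n * (phi + 1) := by ring
      _ = phi ^ (n+2) := by rw [← phi_sq]; ring


lemma q_pos {q : ℝ} (hq : phi < q) : (0:ℝ) < q := lt_trans (by linarith [one_lt_phi]) hq

lemma D_pos {q : ℝ} (hq : phi < q) : 0 < q ^ 2 - q - 1 := by
  have h5 : Real.sqrt 5 ^ 2 = 5 := Real.sq_sqrt (by norm_num)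
  have h5' : (0:ℝ) ≤ Real.sqrt 5 := Real.sqrt_nonneg 5
  unfold phi at hq
  nlinarith [hq, h5, h5']

lemma summable_f1 {q : ℝ} (hq : phi < q) : Summable (fun k => (Nat.fib (k+1) : ℝ) / q ^ k) := by
  have hq0 := q_pos hq
  have hphi : (0:ℝ) < phi := by linarith [one_lt_phi]
  have hr : phi / q < 1 := (div_lt_one hq0).2 hq
  refine Summable.of_nonneg_of_le
    (fun k => div_nonneg (Nat.cast_nonneg _) (pow_pos hq0 k).le) (fun k => ?_)
    (summable_geometric_of_lt_one (by positivity) hr)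
  rw [div_pow]
  exact div_le_div_of_nonneg_right (fib_le_phi_pow k) (pow_pos hq0 k).le |>.trans_eq rfl

lemma summable_f {q : ℝ} (hq : phi < q) : Summable (fun k => (Nat.fib k : ℝ) / q ^ k) := by
  have hq0 := q_pos hq
  refine Summable.of_nonneg_of_le
    (fun k => div_nonneg (Nat.cast_nonneg _) (pow_pos hq0 k).le) (fun k => ?_) (summable_f1 hq)
  have h : (Nat.fib k : ℝ) ≤ Nat.fib (k+1) := by exact_mod_cast Nat.fib_le_fib_succ
  exact div_le_div_of_nonneg_right h (pow_pos hq0 k).le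

set_option maxHeartbeats 1000000 in
lemma tsum_f_eq {q : ℝ} (hq : phi < q) :
    ∑' k, (Nat.fib k : ℝ) / q ^ k = q / (q ^ 2 - q - 1) := by
  have hq0 := q_pos hq
  have hD := D_pos hq
  have hs := summable_f hq
  have hs1 : Summable (fun k => (Nat.fib (k+1) : ℝ) / q ^ (k+1)) :=
    (summable_nat_add_iff 1).2 hs
  have hs2 : Summable (fun k => (Nat.fib (k+2) : ℝ) / q ^ (k+2)) :=
    (summable_nat_add_iff 2).2 hs
  set A := ∑' k, (Nat.fib k : ℝ) / q ^ k with hA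
  have e1 : A = ∑' k, (Nat.fib (k+1) : ℝ) / q ^ (k+1) := by
    rw [hA, Summable.tsum_eq_zero_add hs]; simp
  have e3 : ∀ k : ℕ, (Nat.fib (k+2) : ℝ) / q ^ (k+2)
      = (1/q) * ((Nat.fib (k+1) : ℝ) / q ^ (k+1)) + (1/q^2) * ((Nat.fib k : ℝ) / q ^ k) := by
    intro k
    rw [Nat.fib_add_two]; push_cast
    field_simp
    ring
  have e4 : ∑' k, (Nat.fib (k+2) : ℝ) / q ^ (k+2) = (1/q) * A + (1/q^2) * A := by
    rw [tsum_congr e3, Summable.tsum_add (hs1.mul_left _) (hs.mul_left _), tsum_mul_left, tsum_mul_left,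
      ← e1]
  have e2 : A = 1/q + ((1/q) * A + (1/q^2) * A) := by
    conv_lhs => rw [e1, Summable.tsum_eq_zero_add hs1]
    simp only [show ∀ b:ℕ, b+1+1 = b+2 from fun _ => rfl]
    rw [e4]
    norm_num
  have key : A * (q ^ 2 - q - 1) = q := by
    field_simp at e2
    nlinarith [e2]
  rw [eq_div_iff (by linarith)]
  exact key

lemma tsum_f1_eq {q : ℝ} (hq : phi < q) :
    ∑' k, (Nat.fib (k+1) : ℝ) / q ^ k = q ^ 2 / (q ^ 2 - q - 1) := by
  have hq0 := q_pos hq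
  have hD := D_pos hq
  have hs := summable_f hq
  have e1 : ∑' k, (Nat.fib (k+1) : ℝ) / q ^ (k+1) = q / (q^2 - q - 1) := by
    rw [← tsum_f_eq hq, Summable.tsum_eq_zero_add hs]; simp
  have e2 : ∀ k : ℕ, (Nat.fib (k+1) : ℝ) / q ^ k = q * ((Nat.fib (k+1) : ℝ) / q ^ (k+1)) := by
    intro k; rw [pow_succ]; field_simp
  rw [tsum_congr e2, tsum_mul_left, e1]
  field_simp

lemma tail_eq {q : ℝ} (hq : phi < q) (n : ℕ) :
    ∑' k, (Nat.fib (k + n + 1) : ℝ) / q ^ (k + n)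
      = ((Nat.fib n : ℝ) * (q / (q^2 - q - 1))
          + (Nat.fib (n+1) : ℝ) * (q^2 / (q^2 - q - 1))) / q ^ n := by
  have hq0 := q_pos hq
  have hD := D_pos hq
  have e : ∀ k : ℕ, (Nat.fib (k + n + 1) : ℝ) / q ^ (k + n)
      = (Nat.fib n : ℝ) / q ^ n * ((Nat.fib k : ℝ) / q ^ k)
        + (Nat.fib (n+1) : ℝ) / q ^ n * ((Nat.fib (k+1) : ℝ) / q ^ k) := by
    intro k
    rw [show k + n + 1 = n + k + 1 from by omega, Nat.fib_add, pow_add]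
    push_cast
    field_simp
  rw [tsum_congr e, Summable.tsum_add ((summable_f hq).mul_left _) ((summable_f1 hq).mul_left _),
    tsum_mul_left, tsum_mul_left, tsum_f_eq hq, tsum_f1_eq hq]
  field_simp

noncomputable def rem (a : ℕ → ℝ) (x : ℝ) : ℕ → ℝ
  | 0 => x
  | n+1 => if a n ≤ rem a x n then rem a x n - a n else rem a x n

lemma rem_succ (a : ℕ → ℝ) (x : ℝ) (n : ℕ) :
    rem a x (n+1) = if a n ≤ rem a x n then rem a x n - a n else rem a x n := rfl

theorem reachable_set_eq_Icc (q : ℝ) (hq1 : phi < q) (hq2 : q ≤ 1 + Real.sqrt 3) :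
    {x : ℝ | ∃ u : ℕ → ℝ, (∀ k, u k = 0 ∨ u k = 1) ∧
        x = ∑' k : ℕ, fibr k / q ^ k * u k} = Set.Icc 0 (q ^ 2 / (q ^ 2 - q - 1)) := by
  classical
  have hq0 := q_pos hq1
  have hD := D_pos hq1
  set a : ℕ → ℝ := fun k => (Nat.fib (k+1) : ℝ) / q ^ k with ha
  have hfibr : ∀ k, fibr k / q ^ k = a k := fun k => rfl
  have ha_nonneg : ∀ k, 0 ≤ a k :=
    fun k => div_nonneg (Nat.cast_nonneg _) (pow_pos hq0 k).le
  have hsum_a : Summable a := summable_f1 hq1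
  have htot : ∑' k, a k = q ^ 2 / (q ^ 2 - q - 1) := tsum_f1_eq hq1
  set T : ℕ → ℝ := fun n => ∑' k, a (k + n) with hTdef
  have hTform : ∀ n, T n = ((Nat.fib n : ℝ) * (q / (q^2 - q - 1))
      + (Nat.fib (n+1) : ℝ) * (q^2 / (q^2 - q - 1))) / q ^ n := by
    intro n
    rw [hTdef]
    exact tail_eq hq1 n
  have hT0 : T 0 = q ^ 2 / (q ^ 2 - q - 1) := by
    rw [hTform 0]; norm_num
  have hfibrec : ∀ n : ℕ, (Nat.fib (n+2) : ℝ) = Nat.fib (n+1) + Nat.fib n := by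
    intro n; rw [Nat.fib_add_two]; push_cast; ring
  have hsplit : ∀ n, T n = a n + T (n+1) := by
    intro n
    rw [hTform n, hTform (n+1), ha, hfibrec n]
    simp only []
    obtain ⟨D, hDd⟩ : ∃ D, q ^ 2 - q - 1 = D := ⟨_, rfl⟩
    have hD0 : D ≠ 0 := hDd ▸ hD.ne'
    rw [hDd]
    field_simp
    rw [← hDd]
    ring
  have hK : ∀ n, a n ≤ T (n+1) := by
    intro n
    have hmono : (Nat.fib (n+1) : ℝ) ≤ Nat.fib (n+2) := by
      exact_mod_cast Nat.fib_le_fib_succ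
    have hfn : (0:ℝ) ≤ Nat.fib (n+1) := Nat.cast_nonneg _
    have h3 : Real.sqrt 3 ^ 2 = 3 := Real.sq_sqrt (by norm_num)
    have hs3 : (1:ℝ) ≤ Real.sqrt 3 := by nlinarith [h3, Real.sqrt_nonneg 3]
    have hq2' : q^2 - 2*q - 2 ≤ 0 := by
      nlinarith [mul_nonneg (sub_nonneg.2 hq2) (by linarith : (0:ℝ) ≤ q - 1 + Real.sqrt 3), h3]
    have key : (Nat.fib (n+1):ℝ) * q ≤ (Nat.fib (n+1):ℝ) * (q/(q^2-q-1))
        + (Nat.fib (n+2):ℝ) * (q^2/(q^2-q-1)) := by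
      rw [← mul_div_assoc, ← mul_div_assoc, ← add_div, le_div_iff₀ hD]
      nlinarith [hq2', hmono, hfn, hq0, mul_nonneg (mul_nonneg hfn hq0.le) hq0.le,
        mul_le_mul_of_nonneg_right hmono (mul_pos hq0 hq0).le,
        mul_nonneg (mul_nonneg hfn hq0.le) (sub_nonneg.2 (le_of_lt hq0))]
    rw [hTform (n+1), ha]
    simp only []
    rw [div_le_div_iff₀ (pow_pos hq0 n) (pow_pos hq0 (n+1)), pow_succ]
    calc (Nat.fib (n+1):ℝ) * (q ^ n * q) = ((Nat.fib (n+1):ℝ) * q) * q ^ n := by ring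
      _ ≤ ((Nat.fib (n+1):ℝ) * (q/(q^2-q-1)) + (Nat.fib (n+2):ℝ) * (q^2/(q^2-q-1))) * q ^ n :=
          mul_le_mul_of_nonneg_right key (pow_pos hq0 n).le
  have hTtend : Filter.Tendsto T Filter.atTop (nhds 0) := by
    rw [hTdef]; exact tendsto_sum_nat_add a
  ext x
  simp only [Set.mem_setOf_eq, Set.mem_Icc]
  constructor
  · rintro ⟨u, hu, rfl⟩
    have hu0 : ∀ k, 0 ≤ u k := fun k => by rcases hu k with h|h <;> simp [h]
    have hu1 : ∀ k, u k ≤ 1 := fun k => by rcases hu k with h|h <;> simp [h]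
    have hnn : ∀ k, 0 ≤ fibr k / q ^ k * u k := fun k => by
      rw [hfibr]; exact mul_nonneg (ha_nonneg k) (hu0 k)
    have hle : ∀ k, fibr k / q ^ k * u k ≤ a k := fun k => by
      rw [hfibr]
      calc a k * u k ≤ a k * 1 := mul_le_mul_of_nonneg_left (hu1 k) (ha_nonneg k)
        _ = a k := mul_one _
    have hsum : Summable (fun k => fibr k / q ^ k * u k) :=
      Summable.of_nonneg_of_le hnn hle hsum_a
    exact ⟨tsum_nonneg hnn, htot ▸ Summable.tsum_le_tsum hle hsum hsum_a⟩
  · rintro ⟨hx0, hx1⟩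
    set r : ℕ → ℝ := rem a x with hr
    set u : ℕ → ℝ := fun k => if a k ≤ r k then 1 else 0 with hu
    refine ⟨u, fun k => ?_, ?_⟩
    · rw [show u k = if a k ≤ r k then (1:ℝ) else 0 from rfl]
      split_ifs <;> simp
    have hrsucc : ∀ n, r (n+1) = if a n ≤ r n then r n - a n else r n := fun n => rfl
    have hr0 : r 0 = x := rfl
    have inv : ∀ n, 0 ≤ r n ∧ r n ≤ T n := by
      intro n
      induction n with
      | zero => exact ⟨hr0 ▸ hx0, by rw [hr0, hT0]; exact hx1⟩
      | succ n ih =>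
        rw [hrsucc n]
        split_ifs with h
        · refine ⟨by linarith [ih.1], ?_⟩
          have := hsplit n
          linarith [ih.2]
        · exact ⟨ih.1, le_trans (le_of_not_ge h) (hK n)⟩
    have psum : ∀ n, ∑ k ∈ Finset.range n, a k * u k = x - r n := by
      intro n
      induction n with
      | zero => simp [hr0]
      | succ n ih =>
        rw [Finset.sum_range_succ, ih, hrsucc n,
          show u n = if a n ≤ r n then (1:ℝ) else 0 from rfl]
        by_cases h : a n ≤ r n
        · rw [if_pos h, if_pos h]; ring
        · rw [if_neg h, if_neg h]; ring
    have hrtend : Filter.Tendsto r Filter.atTop (nhds 0) :=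
      squeeze_zero (fun n => (inv n).1) (fun n => (inv n).2) hTtend
    have hptend : Filter.Tendsto (fun n => ∑ k ∈ Finset.range n, a k * u k)
        Filter.atTop (nhds x) := by
      simp only [psum]
      simpa using Filter.Tendsto.sub (tendsto_const_nhds (x := x)) hrtend
    have hnn : ∀ k, 0 ≤ a k * u k := fun k =>
      mul_nonneg (ha_nonneg k) (by rw [show u k = if a k ≤ r k then (1:ℝ) else 0 from rfl]; split_ifs <;> norm_num)
    have hhs : HasSum (fun k => a k * u k) x :=
      (hasSum_iff_tendsto_nat_of_nonneg hnn x).2 hptend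
    have : x = ∑' k, a k * u k := hhs.tsum_eq.symm
    rw [this]
    exact tsum_congr fun k => by rw [hfibr]
end
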